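/- arXiv:2507.01221 — 4 statements merged into one kernel-verified Lean document; each statement's English description precedes it below -/
import Mathlib

section
/- Let λ = (λ_1,…,λ_n) ∈ ℤ^n with λ_1 ≥ λ_2 ≥ … ≥ λ_n, and let V be the complex vector space with basis the (finite) set of standard Gelfand–Tsetlin tableaux with top row l_{nj} = λ_j − j + 1 (j = 1,…,n), equipped with the operators E_{k,k+1}, E_{k+1,k}, E_{kk} given by the Gelfand–Tsetlin formulas (non-standard tableaux replaced by 0). Then V is a simple module: the only subspaces of V invariant under all the operators E_{k,k+1}, E_{k+1,k} (1 ≤ k ≤ n−1) and E_{kk} (1 ≤ k ≤ n) are 0 and V. -/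
/-!
Standard tableaux have integer entries, bounded above by those of the highest tableau
`l_{ki} = λ_i - i + 1`, and the defect, a positively weighted sum of the differences, measures
how far a tableau lies below it. If `Q` is not the highest tableau, let `l_{ki} < l_{k+1,i}` with
`k` as small as possible. Then `Q + δ^{ki}` is standard, it occurs in `E_{k,k+1} Q` and `Q` occurs
in `E_{k+1,k} (Q + δ^{ki})` with nonzero coefficients, and every other tableau that takes part
in these two relations has smaller defect than `Q`.

Starting from a nonzero vector of an invariant subspace, raising operators therefore lower the
least defect in the support until the support contains the highest tableau, which the diagonal
operators isolate: their eigenvalues determine the row sums, and the highest tableau is the only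
standard one with its row sums. From the highest tableau the lowering operators then produce every
basis tableau, by induction on the defect.
-/

namespace GT

/-- A Gelfand–Tsetlin tableau: an assignment of a complex number to each position `(i,j)`.
Only positions in the vertex set `Vtx n` are relevant. -/
abbrev Tableau := ℕ × ℕ → ℂ

/-- The vertex set `𝔙 = {(i,j) : 1 ≤ j ≤ i ≤ n}`. -/
def Vtx (n : ℕ) : Set (ℕ × ℕ) := {p | 1 ≤ p.2 ∧ p.2 ≤ p.1 ∧ p.1 ≤ n}

/-- `z ∈ ℤ_{≥0}` (as a complex number). -/
def IsNonnegInt (z : ℂ) : Prop := ∃ m : ℕ, z = (m : ℂ)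

/-- `z ∈ ℤ_{>0}` (as a complex number). -/
def IsPosInt (z : ℂ) : Prop := ∃ m : ℕ, z = (m : ℂ) + 1

/-- `z ∈ ℤ` (as a complex number). -/
def IsInt (z : ℂ) : Prop := ∃ m : ℤ, z = (m : ℂ)

/-- The arrow relation of the graph `G(M)` associated with a tableau `M`. -/
def graphOf (n : ℕ) (M : Tableau) : (ℕ × ℕ) → (ℕ × ℕ) → Prop := fun a b =>
  a ∈ Vtx n ∧ b ∈ Vtx n ∧
    ((a.1 = b.1 + 1 ∧ IsNonnegInt (M a - M b)) ∨
     (b.1 = a.1 + 1 ∧ IsPosInt (M a - M b)) ∨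
     (a.1 = n ∧ b.1 = n ∧ a.2 ≠ b.2 ∧ IsNonnegInt (M a - M b)))

/-- The arrow relation of `Ḡ`: an arrow `a → b` iff there is a directed path in `G`
from `a` to `b` with `|a.1 - b.1| = 1`, or `a, b` are distinct vertices in row `n`. -/
def bar (n : ℕ) (E : (ℕ × ℕ) → (ℕ × ℕ) → Prop) : (ℕ × ℕ) → (ℕ × ℕ) → Prop := fun a b =>
  (Relation.TransGen E a b ∧ (a.1 = b.1 + 1 ∨ b.1 = a.1 + 1)) ∨
  (a ∈ Vtx n ∧ b ∈ Vtx n ∧ a.1 = n ∧ b.1 = n ∧ a.2 ≠ b.2)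

/-- The graph difference `G ∖ H` (on arrow relations). -/
def gdiff (E F : (ℕ × ℕ) → (ℕ × ℕ) → Prop) : (ℕ × ℕ) → (ℕ × ℕ) → Prop :=
  fun a b => E a b ∧ ¬ F a b

/-- `E⁺_H`: the set of arrows of `H` pointing down (from row `k+1` to row `k`). -/
def Eplus (E : (ℕ × ℕ) → (ℕ × ℕ) → Prop) : Set ((ℕ × ℕ) × (ℕ × ℕ)) :=
  {p | E p.1 p.2 ∧ p.1.1 = p.2.1 + 1}

/-- `𝔙_H`: the set of vertices incident to some arrow of `H`. -/
def VtxOf (E : (ℕ × ℕ) → (ℕ × ℕ) → Prop) : Set (ℕ × ℕ) :=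
  {a | (∃ b, E a b) ∨ (∃ b, E b a)}

/-- `((k,i),(k,j))` is an adjoining pair of vertices in the graph with arrow relation `E`. -/
def Adjoining (n : ℕ) (E : (ℕ × ℕ) → (ℕ × ℕ) → Prop) (k i j : ℕ) : Prop :=
  1 ≤ i ∧ i < j ∧ j ≤ k ∧ k ≤ n - 1 ∧ Relation.TransGen E (k, i) (k, j) ∧
    ∀ t, i < t → t < j →
      ¬ Relation.TransGen E (k, i) (k, t) ∧ ¬ Relation.TransGen E (k, t) (k, j)

/-- The arrow relation `E` is a relation graph on `𝔙`. -/
def IsRelationGraph (n : ℕ) (E : (ℕ × ℕ) → (ℕ × ℕ) → Prop) : Prop :=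
  -- (i) arrows join vertices of 𝔙 in consecutive rows, or two distinct vertices in row n
  (∀ a b, E a b → a ∈ Vtx n ∧ b ∈ Vtx n ∧
      (a.1 = b.1 + 1 ∨ b.1 = a.1 + 1 ∨ (a.1 = n ∧ b.1 = n ∧ a.2 ≠ b.2))) ∧
  -- (ii) no directed path from (k,j) to (k,i) for 1 ≤ i < j ≤ k
  (∀ k i j : ℕ, 1 ≤ i → i < j → j ≤ k → ¬ Relation.TransGen E (k, j) (k, i)) ∧
  -- (iii) no oriented cycles
  (∀ a, ¬ Relation.TransGen E a a) ∧
  -- (iv) vertices in a row k < n in the same connected component are joined by a directed path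
  (∀ k i j : ℕ, k < n → (k, i) ∈ Vtx n → (k, j) ∈ Vtx n → i ≠ j →
      Relation.EqvGen E (k, i) (k, j) →
      Relation.TransGen E (k, i) (k, j) ∨ Relation.TransGen E (k, j) (k, i)) ∧
  -- (v) no crossing pair of down arrows
  (∀ k r s i j : ℕ, r < s → i < j → ¬ (E (k+1, r) (k, j) ∧ E (k+1, s) (k, i))) ∧
  -- (vi) condition on adjoining pairs
  (∀ k i j : ℕ, Adjoining n E k i j →
      (∃ p q, E (k, i) (k+1, p) ∧ E (k+1, p) (k, j) ∧
              E (k, i) (k-1, q) ∧ E (k-1, q) (k, j)) ∨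
      (∃ s t, s < t ∧ E (k, i) (k+1, s) ∧ E (k+1, t) (k, j)))

/-- The tableau `M` satisfies the graph with arrow relation `E`. -/
def Satisfies (n : ℕ) (M : Tableau) (E : (ℕ × ℕ) → (ℕ × ℕ) → Prop) : Prop :=
  ∀ i j r s : ℕ, E (i, j) (r, s) →
    ((i = r + 1 ∨ (i = n ∧ r = n ∧ j < s)) → IsNonnegInt (M (i, j) - M (r, s))) ∧
    (r = i + 1 → IsPosInt (M (i, j) - M (r, s)))

/-- The tableau `M` is a `G`-realization, for `G` the graph with arrow relation `E`. -/
def IsRealization (n : ℕ) (E : (ℕ × ℕ) → (ℕ × ℕ) → Prop) (M : Tableau) : Prop :=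
  Satisfies n M E ∧
  ∀ k i j : ℕ, k ≤ n - 1 → (k, i) ∈ Vtx n → (k, j) ∈ Vtx n → i ≠ j →
    IsInt (M (k, i) - M (k, j)) → Relation.EqvGen E (k, i) (k, j)

/-- `z ∈ ℤ₀`: an integral vector indexed by `𝔙` vanishing on row `n`. -/
def ZZ0 (n : ℕ) (z : ℕ × ℕ → ℤ) : Prop :=
  (∀ i, z (n, i) = 0) ∧ ∀ p, p ∉ Vtx n → z p = 0

/-- The tableau `T(M + z)`. -/
def addZ (M : Tableau) (z : ℕ × ℕ → ℤ) : Tableau := fun p => M p + (z p : ℂ)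

/-- The vector `c · δ^v ∈ ℤ₀`. -/
def sing (v : ℕ × ℕ) (c : ℤ) : ℕ × ℕ → ℤ := fun p => if p = v then c else 0

/-- `B_G(T(L))`: the set of all `G`-realizations of the form `T(L+z)` with `z ∈ ℤ₀`. -/
def BG (n : ℕ) (E : (ℕ × ℕ) → (ℕ × ℕ) → Prop) (L : Tableau) : Set Tableau :=
  {M | ∃ z : ℕ × ℕ → ℤ, ZZ0 n z ∧ M = addZ L z ∧ IsRealization n E M}

/-- The coefficient of `T(M + δ^{ki})` in `E_{k,k+1}(T(M))`. -/
noncomputable def raiseCoeff (M : Tableau) (k i : ℕ) : ℂ :=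
  -((∏ j ∈ Finset.Icc 1 (k+1), (M (k, i) - M (k+1, j))) /
    (∏ j ∈ (Finset.Icc 1 k).erase i, (M (k, i) - M (k, j))))

/-- The coefficient of `T(M - δ^{ki})` in `E_{k+1,k}(T(M))`. -/
noncomputable def lowerCoeff (M : Tableau) (k i : ℕ) : ℂ :=
  (∏ j ∈ Finset.Icc 1 (k-1), (M (k, i) - M (k-1, j))) /
    (∏ j ∈ (Finset.Icc 1 k).erase i, (M (k, i) - M (k, j)))

/-- The eigenvalue of `E_{kk}` on `T(M)`. -/
noncomputable def diagCoeff (M : Tableau) (k : ℕ) : ℂ :=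
  ((k : ℂ) - 1) + (∑ i ∈ Finset.Icc 1 k, M (k, i)) - (∑ i ∈ Finset.Icc 1 (k-1), M (k-1, i))

/-- The tableau `T(M + c·δ^{ki})`. -/
def shift (M : Tableau) (k i : ℕ) (c : ℤ) : Tableau :=
  fun p => M p + if p = (k, i) then (c : ℂ) else 0

/-- The basis vector of `M` in the space with basis `B`, or `0` if `M ∉ B`. -/
noncomputable def emb (B : Set Tableau) (M : Tableau) : (↥B →₀ ℂ) := by
  classical exact if h : M ∈ B then Finsupp.single (⟨M, h⟩ : ↥B) 1 else 0

/-- The Gelfand–Tsetlin operator `E_{k,k+1}` on the space with basis `B`. -/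
noncomputable def raiseOp (B : Set Tableau) (k : ℕ) : (↥B →₀ ℂ) →ₗ[ℂ] (↥B →₀ ℂ) :=
  Finsupp.lsum ℂ fun T => LinearMap.toSpanSingleton ℂ _
    (∑ i ∈ Finset.Icc 1 k, raiseCoeff (T : Tableau) k i • emb B (shift (T : Tableau) k i 1))

/-- The Gelfand–Tsetlin operator `E_{k+1,k}` on the space with basis `B`. -/
noncomputable def lowerOp (B : Set Tableau) (k : ℕ) : (↥B →₀ ℂ) →ₗ[ℂ] (↥B →₀ ℂ) :=
  Finsupp.lsum ℂ fun T => LinearMap.toSpanSingleton ℂ _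
    (∑ i ∈ Finset.Icc 1 k, lowerCoeff (T : Tableau) k i • emb B (shift (T : Tableau) k i (-1)))

/-- The Gelfand–Tsetlin operator `E_{kk}` on the space with basis `B`. -/
noncomputable def diagOp (B : Set Tableau) (k : ℕ) : (↥B →₀ ℂ) →ₗ[ℂ] (↥B →₀ ℂ) :=
  Finsupp.lsum ℂ fun T => LinearMap.toSpanSingleton ℂ _
    (diagCoeff (T : Tableau) k • Finsupp.single T (1 : ℂ))

/-- A subspace of the space with basis `B` is a submodule if it is invariant under all the
Gelfand–Tsetlin operators `E_{k,k+1}`, `E_{k+1,k}` (1 ≤ k ≤ n-1) and `E_{kk}` (1 ≤ k ≤ n). -/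
def IsSubmoduleGT (n : ℕ) (B : Set Tableau) (W : Submodule ℂ (↥B →₀ ℂ)) : Prop :=
  (∀ k, 1 ≤ k → k ≤ n - 1 → ∀ v ∈ W, raiseOp B k v ∈ W ∧ lowerOp B k v ∈ W) ∧
  (∀ k, 1 ≤ k → k ≤ n → ∀ v ∈ W, diagOp B k v ∈ W)

/-- `U · T(R)`: the smallest submodule containing the basis tableau `T`. -/
noncomputable def genSub (n : ℕ) (B : Set Tableau) (T : ↥B) : Submodule ℂ (↥B →₀ ℂ) :=
  sInf {W | IsSubmoduleGT n B W ∧ Finsupp.single T 1 ∈ W}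

/-- `T(R) ≼₍₁₎ T(Q)`: the tableau `Q` appears with nonzero coefficient in `g · T(R)` for one
of the Gelfand–Tsetlin operators `g`. -/
def Prec1 (n : ℕ) (B : Set Tableau) (R Q : ↥B) : Prop :=
  (∃ k, 1 ≤ k ∧ k ≤ n - 1 ∧
    ((raiseOp B k (Finsupp.single R 1)) Q ≠ 0 ∨ (lowerOp B k (Finsupp.single R 1)) Q ≠ 0)) ∨
  (∃ k, 1 ≤ k ∧ k ≤ n ∧ (diagOp B k (Finsupp.single R 1)) Q ≠ 0)

/-- A standard Gelfand–Tsetlin tableau (entries outside `𝔙` normalized to `0`). -/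
def IsStandard (n : ℕ) (M : Tableau) : Prop :=
  ∀ k i : ℕ, 2 ≤ k → k ≤ n → 1 ≤ i → i < k →
    IsNonnegInt (M (k, i) - M (k-1, i)) ∧ IsPosInt (M (k-1, i) - M (k, i+1))

/-- The set of standard tableaux with top row `l_{nj} = λ_j - j + 1`. -/
def StdB (n : ℕ) (lam : ℕ → ℤ) : Set Tableau :=
  {M | (∀ p, p ∉ Vtx n → M p = 0) ∧ IsStandard n M ∧
    ∀ j : ℕ, 1 ≤ j → j ≤ n → M (n, j) = (lam j : ℂ) - (j : ℂ) + 1}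

/-- On a standard tableau, whose entries are integers, this is the entry itself. -/
noncomputable def intEntry (M : Tableau) (p : ℕ × ℕ) : ℤ := ⌊(M p).re⌋

section IntEntry

variable {M : Tableau} {p q : ℕ × ℕ}

lemma intEntry_of_eq_intCast {m : ℤ} (h : M p = m) : intEntry M p = m := by
  simp [intEntry, h]

lemma sub_ne_zero_of_intEntry_ne (h : intEntry M p ≠ intEntry M q) : M p - M q ≠ 0 :=
  sub_ne_zero.2 fun hpq => h (by rw [intEntry, intEntry, hpq])

lemma IsNonnegInt.intEntry_le (h : IsNonnegInt (M p - M q)) : intEntry M q ≤ intEntry M p := by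
  obtain ⟨m, hm⟩ := h
  rw [intEntry, intEntry, sub_eq_iff_eq_add'.1 hm, Complex.add_re, Complex.natCast_re,
    Int.floor_add_natCast]
  omega

lemma IsPosInt.intEntry_lt (h : IsPosInt (M p - M q)) : intEntry M q < intEntry M p := by
  obtain ⟨m, hm⟩ := h
  rw [intEntry, intEntry, sub_eq_iff_eq_add'.1 hm, ← Nat.cast_add_one, Complex.add_re,
    Complex.natCast_re, Int.floor_add_natCast]
  omega

lemma isNonnegInt_intCast_sub {a b : ℤ} (h : b ≤ a) : IsNonnegInt ((a : ℂ) - b) :=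
  ⟨(a - b).toNat, by rw [← Int.cast_natCast, Int.toNat_of_nonneg (by omega)]; push_cast; ring⟩

lemma isPosInt_intCast_sub {a b : ℤ} (h : b < a) : IsPosInt ((a : ℂ) - b) :=
  ⟨(a - b - 1).toNat, by rw [← Int.cast_natCast, Int.toNat_of_nonneg (by omega)]; push_cast; ring⟩

lemma intEntry_shift (k i : ℕ) (c : ℤ) :
    intEntry (shift M k i c) p = intEntry M p + if p = (k, i) then c else 0 := by
  unfold intEntry shift
  split_ifs <;> simp [Int.floor_add_intCast]

end IntEntry

def IntInterlacing (n : ℕ) (z : ℕ × ℕ → ℤ) : Prop :=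
  ∀ k i, 1 ≤ i → i ≤ k → k + 1 ≤ n → z (k, i) ≤ z (k + 1, i) ∧ z (k + 1, i + 1) < z (k, i)

namespace IntInterlacing

variable {n : ℕ} {z : ℕ × ℕ → ℤ} (hz : IntInterlacing n z)
include hz

lemma le_succ_row {k i : ℕ} (hi : 1 ≤ i) (hik : i ≤ k) (hk : k + 1 ≤ n) :
    z (k, i) ≤ z (k + 1, i) :=
  (hz k i hi hik hk).1

lemma succ_succ_lt {k i : ℕ} (hi : 1 ≤ i) (hik : i ≤ k) (hk : k + 1 ≤ n) :
    z (k + 1, i + 1) < z (k, i) :=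
  (hz k i hi hik hk).2

lemma row_lt {k j j' : ℕ} (hj : 1 ≤ j) (hjj' : j < j') (hj'k : j' ≤ k) (hk : k ≤ n) :
    z (k, j') < z (k, j) := by
  induction j', hjj' using Nat.le_induction with
  | base =>
    obtain ⟨m, rfl⟩ : ∃ m, k = m + 1 := ⟨k - 1, by omega⟩
    exact (hz.succ_succ_lt hj (by omega) hk).trans_le (hz.le_succ_row hj (by omega) hk)
  | succ j' hjj' ih =>
    obtain ⟨m, rfl⟩ : ∃ m, k = m + 1 := ⟨k - 1, by omega⟩
    exact ((hz.succ_succ_lt (by omega) (by omega) hk).trans_le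
      (hz.le_succ_row (by omega) (by omega) hk)).trans (ih (by omega))

lemma row_le {k j j' : ℕ} (hj : 1 ≤ j) (hjj' : j ≤ j') (hj'k : j' ≤ k) (hk : k ≤ n) :
    z (k, j') ≤ z (k, j) := by
  rcases hjj'.eq_or_lt with rfl | h
  · rfl
  · exact (hz.row_lt hj h hj'k hk).le

lemma col_le {k k' i : ℕ} (hi : 1 ≤ i) (hik : i ≤ k) (hkk' : k ≤ k') (hk' : k' ≤ n) :
    z (k, i) ≤ z (k', i) := by
  induction k', hkk' using Nat.le_induction with
  | base => rfl
  | succ k' hkk' ih => exact (ih (by omega)).trans (hz.le_succ_row hi (by omega) hk')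

end IntInterlacing

section Standard

variable {n : ℕ} {lam : ℕ → ℤ} {M Q : Tableau}

lemma IsStandard.intInterlacing (hM : IsStandard n M) : IntInterlacing n (intEntry M) := by
  intro k i hi hik hk
  have h := hM (k + 1) i (by omega) hk hi (by omega)
  rw [Nat.add_sub_cancel] at h
  exact ⟨h.1.intEntry_le, h.2.intEntry_lt⟩

lemma isStandard_of_intInterlacing (hM : ∀ p, (intEntry M p : ℂ) = M p)
    (hz : IntInterlacing n (intEntry M)) : IsStandard n M := by
  intro k i hk hkn hi hik
  obtain ⟨m, rfl⟩ : ∃ m, k = m + 1 := ⟨k - 1, by omega⟩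
  rw [Nat.add_sub_cancel, ← hM, ← hM, ← hM]
  exact ⟨isNonnegInt_intCast_sub (hz.le_succ_row hi (by omega) hkn),
    isPosInt_intCast_sub (hz.succ_succ_lt hi (by omega) hkn)⟩

def topEntry (lam : ℕ → ℤ) (j : ℕ) : ℤ := lam j - j + 1

lemma mem_StdB_of_intInterlacing (hM : ∀ p, (intEntry M p : ℂ) = M p)
    (h0 : ∀ p ∉ Vtx n, M p = 0) (hz : IntInterlacing n (intEntry M))
    (htop : ∀ j, 1 ≤ j → j ≤ n → intEntry M (n, j) = topEntry lam j) : M ∈ StdB n lam :=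
  ⟨h0, isStandard_of_intInterlacing hM hz, fun j hj hjn => by
    rw [← hM, htop j hj hjn, topEntry]; push_cast; ring⟩

namespace StdB

lemma intEntry_top (hQ : Q ∈ StdB n lam) {j : ℕ} (hj : 1 ≤ j) (hjn : j ≤ n) :
    intEntry Q (n, j) = topEntry lam j :=
  intEntry_of_eq_intCast (by rw [hQ.2.2 j hj hjn, topEntry]; push_cast; ring)

lemma intCast_intEntry (hQ : Q ∈ StdB n lam) (p : ℕ × ℕ) : (intEntry Q p : ℂ) = Q p := by
  obtain ⟨k, i⟩ := p
  by_cases hp : (k, i) ∉ Vtx n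
  · simp [intEntry, hQ.1 _ hp]
  obtain ⟨hi, hik, hkn⟩ : 1 ≤ i ∧ i ≤ k ∧ k ≤ n := not_not.1 hp
  clear hp
  induction hkn using Nat.decreasingInduction with
  | self => rw [intEntry_top hQ hi hik, hQ.2.2 i hi hik, topEntry]; push_cast; ring
  | of_succ k hk ih =>
    obtain ⟨m, hm⟩ := (hQ.2.1 (k + 1) i (by omega) hk hi (by omega)).1
    rw [Nat.add_sub_cancel, ← ih (by omega)] at hm
    have hQk : Q (k, i) = ((intEntry Q (k + 1, i) - m : ℤ) : ℂ) := by
      push_cast; linear_combination -hm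
    rw [intEntry_of_eq_intCast hQk, hQk]

lemma intInterlacing (hQ : Q ∈ StdB n lam) : IntInterlacing n (intEntry Q) :=
  hQ.2.1.intInterlacing

lemma intEntry_le_topEntry (hQ : Q ∈ StdB n lam) {k i : ℕ} (hi : 1 ≤ i) (hik : i ≤ k)
    (hkn : k ≤ n) : intEntry Q (k, i) ≤ topEntry lam i := by
  rw [← intEntry_top hQ hi (hik.trans hkn)]
  exact (intInterlacing hQ).col_le hi hik hkn le_rfl

end StdB

open Classical in
noncomputable def highest (n : ℕ) (lam : ℕ → ℤ) : Tableau :=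
  fun p => if p ∈ Vtx n then (topEntry lam p.2 : ℂ) else 0

lemma eq_highest_of_intEntry_eq (hQ : Q ∈ StdB n lam)
    (h : ∀ k i, 1 ≤ i → i ≤ k → k ≤ n → intEntry Q (k, i) = topEntry lam i) :
    Q = highest n lam := by
  funext ⟨k, i⟩
  by_cases hp : (k, i) ∈ Vtx n
  · rw [← StdB.intCast_intEntry hQ, h k i hp.1 hp.2.1 hp.2.2, highest, if_pos hp]
  · rw [hQ.1 _ hp, highest, if_neg hp]

lemma eq_highest_of_forall_succ_row_le (hQ : Q ∈ StdB n lam)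
    (h : ∀ k i, 1 ≤ i → i ≤ k → k + 1 ≤ n → intEntry Q (k + 1, i) ≤ intEntry Q (k, i)) :
    Q = highest n lam := by
  refine eq_highest_of_intEntry_eq hQ fun k i hi hik hkn => ?_
  induction hkn using Nat.decreasingInduction with
  | self => exact StdB.intEntry_top hQ hi hik
  | of_succ k hk ih =>
    rw [← ih (by omega)]
    exact le_antisymm ((StdB.intInterlacing hQ).le_succ_row hi hik hk) (h k i hi hik hk)

lemma sum_row_eq_of_diagCoeff_eq {M' : Tableau} {m : ℕ}
    (h : ∀ k, 1 ≤ k → k ≤ m → diagCoeff M k = diagCoeff M' k) :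
    ∑ i ∈ Finset.Icc 1 m, M (m, i) = ∑ i ∈ Finset.Icc 1 m, M' (m, i) := by
  induction m with
  | zero => simp
  | succ m ih =>
    have hm := h (m + 1) (by omega) le_rfl
    rw [diagCoeff, diagCoeff, Nat.add_sub_cancel, ih fun k hk hkm => h k hk (by omega)] at hm
    linear_combination hm

lemma eq_highest_of_diagCoeff_eq (hQ : Q ∈ StdB n lam)
    (h : ∀ k, 1 ≤ k → k ≤ n → diagCoeff Q k = diagCoeff (highest n lam) k) :
    Q = highest n lam := by
  refine eq_highest_of_intEntry_eq hQ fun k i hi hik hkn => ?_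
  have hrow := sum_row_eq_of_diagCoeff_eq (m := k) fun k' h1 h2 => h k' h1 (h2.trans hkn)
  have hhigh : ∀ j ∈ Finset.Icc 1 k, highest n lam (k, j) = (topEntry lam j : ℂ) := by
    intro j hj
    rw [Finset.mem_Icc] at hj
    rw [highest, if_pos ⟨hj.1, hj.2, hkn⟩]
  rw [Finset.sum_congr rfl fun j _ => (StdB.intCast_intEntry hQ (k, j)).symm,
    Finset.sum_congr rfl hhigh] at hrow
  have hsum : ∑ j ∈ Finset.Icc 1 k, intEntry Q (k, j) = ∑ j ∈ Finset.Icc 1 k, topEntry lam j := by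
    exact_mod_cast hrow
  have hle : ∀ j ∈ Finset.Icc 1 k, intEntry Q (k, j) ≤ topEntry lam j := fun j hj => by
    rw [Finset.mem_Icc] at hj; exact StdB.intEntry_le_topEntry hQ hj.1 hj.2 hkn
  exact (Finset.sum_eq_sum_iff_of_le hle).1 hsum i (Finset.mem_Icc.2 ⟨hi, hik⟩)

end Standard

section Coefficients

variable {n : ℕ} {M : Tableau} {k i : ℕ}

lemma prod_row_sub_ne_zero (hM : IsStandard n M) (hi : 1 ≤ i) (hik : i ≤ k) (hk : k ≤ n) :
    ∏ j ∈ (Finset.Icc 1 k).erase i, (M (k, i) - M (k, j)) ≠ 0 := by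
  have hz := hM.intInterlacing
  refine Finset.prod_ne_zero_iff.2 fun j hj => sub_ne_zero_of_intEntry_ne ?_
  rw [Finset.mem_erase, Finset.mem_Icc] at hj
  rcases hj.1.lt_or_gt with hji | hji
  · exact (hz.row_lt hj.2.1 hji hik hk).ne
  · exact (hz.row_lt hi hji hj.2.2 hk).ne'

lemma raiseCoeff_ne_zero (hM : IsStandard n M) (hi : 1 ≤ i) (hik : i ≤ k) (hk : k + 1 ≤ n)
    (h : intEntry M (k, i) < intEntry M (k + 1, i)) : raiseCoeff M k i ≠ 0 := by
  have hz := hM.intInterlacing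
  rw [raiseCoeff, neg_ne_zero]
  refine div_ne_zero (Finset.prod_ne_zero_iff.2 fun j hj => sub_ne_zero_of_intEntry_ne ?_)
    (prod_row_sub_ne_zero hM hi hik (by omega))
  rw [Finset.mem_Icc] at hj
  rcases lt_trichotomy j i with hji | rfl | hji
  · exact ((hz.row_lt hj.1 hji hik (by omega)).trans_le (hz.le_succ_row hj.1 (by omega) hk)).ne
  · exact h.ne
  · exact ((hz.row_le (by omega) hji hj.2 hk).trans_lt (hz.succ_succ_lt hi hik hk)).ne'

lemma lowerCoeff_ne_zero (hM : IsStandard n M) (hi : 1 ≤ i) (hik : i ≤ k) (hk : k ≤ n)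
    (h : i < k → intEntry M (k - 1, i) < intEntry M (k, i)) : lowerCoeff M k i ≠ 0 := by
  have hz := hM.intInterlacing
  refine div_ne_zero (Finset.prod_ne_zero_iff.2 fun j hj => sub_ne_zero_of_intEntry_ne ?_)
    (prod_row_sub_ne_zero hM hi hik hk)
  rw [Finset.mem_Icc] at hj
  obtain ⟨m, rfl⟩ : ∃ m, k = m + 1 := ⟨k - 1, by omega⟩
  rw [Nat.add_sub_cancel] at hj h ⊢
  rcases lt_trichotomy j i with hji | rfl | hji
  · exact ((hz.row_le (by omega) hji hik hk).trans_lt (hz.succ_succ_lt hj.1 hj.2 hk)).ne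
  · exact (h (by omega)).ne'
  · exact ((hz.row_lt hi hji hj.2 (by omega)).trans_le (hz.le_succ_row hi (by omega) hk)).ne'

end Coefficients

section Shift

variable {n : ℕ} {lam : ℕ → ℤ} {Q : Tableau} {k i : ℕ}

lemma shift_shift_neg (M : Tableau) (k i : ℕ) (c : ℤ) : shift (shift M k i c) k i (-c) = M := by
  funext p
  simp only [shift]
  split_ifs <;> simp

lemma shift_mem_StdB (hQ : Q ∈ StdB n lam) (hi : 1 ≤ i) (hik : i ≤ k) (hk : k + 1 ≤ n)
    (hup : intEntry Q (k, i) < intEntry Q (k + 1, i))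
    (hdown : 2 ≤ i → intEntry Q (k, i) + 1 < intEntry Q (k - 1, i - 1)) :
    shift Q k i 1 ∈ StdB n lam := by
  refine mem_StdB_of_intInterlacing (fun p => ?_) (fun p hp => ?_) (fun m j hj hjm hm => ?_)
    (fun j hj hjn => ?_)
  · rw [intEntry_shift, shift, ← StdB.intCast_intEntry hQ]
    split_ifs <;> simp
  · have hpki : p ≠ (k, i) := by rintro rfl; exact hp ⟨hi, hik, by omega⟩
    simp [shift, hQ.1 p hp, hpki]
  · have hQz := StdB.intInterlacing hQ m j hj hjm hm
    simp only [intEntry_shift, Prod.mk.injEq]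
    rcases em (m + 1 = k ∧ j + 1 = i) with ⟨rfl, rfl⟩ | h₂
    · have := hdown (by omega)
      simp only [Nat.add_sub_cancel] at this
      split_ifs <;> omega
    · rcases em (m = k ∧ j = i) with ⟨rfl, rfl⟩ | h₁ <;> split_ifs <;> omega
  · rw [intEntry_shift, if_neg (by simp only [Prod.mk.injEq]; omega), add_zero]
    exact StdB.intEntry_top hQ hj hjn

end Shift

section Defect

variable {n : ℕ} {lam : ℕ → ℤ} {Q : Tableau}

def cells (n : ℕ) : Finset (ℕ × ℕ) :=
  (Finset.Icc 1 n ×ˢ Finset.Icc 1 n).filter fun p => p.2 ≤ p.1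

lemma mem_cells {p : ℕ × ℕ} : p ∈ cells n ↔ p ∈ Vtx n := by
  simp only [cells, Finset.mem_filter, Finset.mem_product, Finset.mem_Icc, Vtx, Set.mem_ofPred_eq]
  omega

/-- The column weights `n + 1 - j` decrease along rows, so that raising `(k, i)` and lowering
`(k, j)` with `i < j` decreases the defect. -/
noncomputable def defect (n : ℕ) (lam : ℕ → ℤ) (Q : Tableau) : ℤ :=
  ∑ p ∈ cells n, ((n : ℤ) + 1 - p.2) * (topEntry lam p.2 - intEntry Q p)

lemma defect_shift {k i : ℕ} (hki : (k, i) ∈ Vtx n) (c : ℤ) :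
    defect n lam (shift Q k i c) = defect n lam Q - c * ((n : ℤ) + 1 - i) := by
  have hterm : ∀ p ∈ cells n,
      ((n : ℤ) + 1 - p.2) * (topEntry lam p.2 - intEntry (shift Q k i c) p) =
        ((n : ℤ) + 1 - p.2) * (topEntry lam p.2 - intEntry Q p) -
          if p = (k, i) then c * ((n : ℤ) + 1 - i) else 0 := by
    intro p _
    rw [intEntry_shift]
    split_ifs with h
    · subst h; ring
    · ring
  rw [defect, defect, Finset.sum_congr rfl hterm, Finset.sum_sub_distrib, Finset.sum_ite_eq',
    if_pos (mem_cells.2 hki)]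

lemma defect_nonneg (hQ : Q ∈ StdB n lam) : 0 ≤ defect n lam Q := by
  refine Finset.sum_nonneg fun p hp => mul_nonneg ?_ ?_
  · have := (mem_cells.1 hp).2.1.trans (mem_cells.1 hp).2.2
    omega
  · obtain ⟨hi, hik, hkn⟩ := mem_cells.1 hp
    exact sub_nonneg.2 (StdB.intEntry_le_topEntry hQ hi hik hkn)

lemma induction_on_defect {motive : StdB n lam → Prop}
    (ih : ∀ Q : StdB n lam, (∀ T : StdB n lam, defect n lam T < defect n lam Q → motive T) →
      motive Q) (Q : StdB n lam) :
    motive Q :=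
  (measure fun T : StdB n lam => (defect n lam T).toNat).wf.induction Q fun Q h =>
    ih Q fun T hT => h T (by
      have := defect_nonneg T.2
      show (defect n lam T).toNat < (defect n lam Q).toNat
      omega)

end Defect

structure IsRaisingPosition (n : ℕ) (lam : ℕ → ℤ) (Q : Tableau) (k i : ℕ) : Prop where
  one_le : 1 ≤ i
  le_row : i ≤ k
  succ_le : k + 1 ≤ n
  shift_mem : shift Q k i 1 ∈ StdB n lam
  raiseCoeff_ne_zero : raiseCoeff Q k i ≠ 0
  lowerCoeff_ne_zero : lowerCoeff (shift Q k i 1) k i ≠ 0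
  defect_lt : ∀ j ∈ Finset.Icc 1 k, j ≠ i → shift (shift Q k i 1) k j (-1) ∈ StdB n lam →
    defect n lam (shift (shift Q k i 1) k j (-1)) < defect n lam Q

section RaisingPosition

variable {n : ℕ} {lam : ℕ → ℤ} {Q : Tableau} {k i : ℕ}

lemma IsRaisingPosition.one_le_row (h : IsRaisingPosition n lam Q k i) : 1 ≤ k :=
  h.one_le.trans h.le_row

lemma IsRaisingPosition.row_le_pred (h : IsRaisingPosition n lam Q k i) : k ≤ n - 1 := by
  have := h.succ_le
  omega

lemma IsRaisingPosition.defect_shift_lt (h : IsRaisingPosition n lam Q k i) :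
    defect n lam (shift Q k i 1) < defect n lam Q := by
  rw [defect_shift ⟨h.one_le, h.le_row, by have := h.succ_le; omega⟩]
  have := h.le_row.trans (Nat.le_of_succ_le h.succ_le)
  omega

/-- Take `l_{ki} < l_{k+1,i}` with `k` minimal. Then row `k - 1` agrees with row `k`, which makes
`Q + δ^{ki}` standard and every `Q + δ^{ki} - δ^{kj}` with `j < i` non-standard. -/
lemma exists_isRaisingPosition (hQ : Q ∈ StdB n lam) (hne : Q ≠ highest n lam) :
    ∃ k i, IsRaisingPosition n lam Q k i := by
  classical
  have hz := StdB.intInterlacing hQ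
  have hgap : ∃ k i, 1 ≤ i ∧ i ≤ k ∧ k + 1 ≤ n ∧ intEntry Q (k, i) < intEntry Q (k + 1, i) := by
    by_contra! h
    exact hne (eq_highest_of_forall_succ_row_le hQ h)
  obtain ⟨k, ⟨i, hi, hik, hk, hup⟩, hmin⟩ := Nat.findX hgap
  have hflat : ∀ j, 1 ≤ j → j < k → intEntry Q (k - 1, j) = intEntry Q (k, j) := by
    intro j hj hjk
    have h₁ := not_lt.1 fun h => hmin (k - 1) (by omega) ⟨j, hj, by omega, by omega, h⟩
    have h₂ := hz.le_succ_row (k := k - 1) hj (by omega) (by omega)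
    rw [Nat.sub_add_cancel (by omega)] at h₁ h₂
    omega
  have hP : shift Q k i 1 ∈ StdB n lam := by
    refine shift_mem_StdB hQ hi hik hk hup fun hi₂ => ?_
    have := hz.succ_succ_lt (k := k) (i := i - 1) (by omega) (by omega) hk
    rw [Nat.sub_add_cancel (by omega)] at this
    rw [hflat (i - 1) (by omega) (by omega)]
    omega
  refine ⟨k, i, hi, hik, hk, hP, raiseCoeff_ne_zero hQ.2.1 hi hik hk hup,
    lowerCoeff_ne_zero hP.2.1 hi hik (by omega) fun hik' => ?_, fun j hj hji hT => ?_⟩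
  · rw [intEntry_shift, intEntry_shift, if_neg (by simp only [Prod.mk.injEq]; omega), if_pos rfl,
      hflat i hi hik']
    omega
  rw [Finset.mem_Icc] at hj
  rcases hji.lt_or_gt with hji | hji
  · have hT := (StdB.intInterlacing hT).le_succ_row (k := k - 1) hj.1 (by omega) (by omega)
    have hf := hflat j hj.1 (by omega)
    rw [Nat.sub_add_cancel (by omega)] at hT
    simp only [intEntry_shift, Prod.mk.injEq] at hT
    split_ifs at hT <;> omega
  · rw [defect_shift ⟨by omega, hj.2, by omega⟩, defect_shift ⟨hi, hik, by omega⟩]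
    have : (i : ℤ) < j := by exact_mod_cast hji
    linarith

end RaisingPosition

section Operators

open Classical

variable {B : Set Tableau}

lemma emb_of_mem {M : Tableau} (h : M ∈ B) : emb B M = Finsupp.single ⟨M, h⟩ 1 := dif_pos h

lemma emb_of_notMem {M : Tableau} (h : M ∉ B) : emb B M = 0 := dif_neg h

lemma emb_apply (M : Tableau) (T : B) : emb B M T = if M = T then 1 else 0 := by
  by_cases h : M ∈ B
  · rw [emb_of_mem h, Finsupp.single_apply]
    exact if_congr ⟨fun h' => congrArg Subtype.val h', fun h' => Subtype.ext h'⟩ rfl rfl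
  · rw [emb_of_notMem h, if_neg (by rintro rfl; exact h T.2)]
    rfl

lemma diagOp_apply (k : ℕ) (v : B →₀ ℂ) (T : B) : diagOp B k v T = diagCoeff T k * v T := by
  induction v using Finsupp.induction_linear with
  | zero => simp
  | add v w hv hw => simp [hv, hw, mul_add]
  | single S c =>
    simp only [diagOp, Finsupp.lsum_single, LinearMap.toSpanSingleton_apply, Finsupp.smul_apply,
      Finsupp.single_apply, smul_eq_mul]
    split_ifs with h
    · subst h; ring
    · simp

lemma raiseOp_apply (k : ℕ) (v : B →₀ ℂ) (T : B) :
    raiseOp B k v T = ∑ S ∈ v.support,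
      v S * ∑ j ∈ Finset.Icc 1 k, raiseCoeff S k j * if shift S k j 1 = T then 1 else 0 := by
  rw [raiseOp, Finsupp.lsum_apply, Finsupp.sum_apply, Finsupp.sum]
  refine Finset.sum_congr rfl fun S _ => ?_
  simp only [LinearMap.toSpanSingleton_apply, Finsupp.smul_apply, smul_eq_mul,
    Finset.sum_apply', emb_apply]

lemma lowerOp_single (k : ℕ) (P : B) : lowerOp B k (Finsupp.single P 1) =
    ∑ j ∈ Finset.Icc 1 k, lowerCoeff P k j • emb B (shift P k j (-1)) := by
  rw [lowerOp, Finsupp.lsum_single, LinearMap.toSpanSingleton_apply, one_smul]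

end Operators

lemma single_mem_of_separating {ι κ K : Type*} [Field K] {W : Submodule K (ι →₀ K)}
    (D : κ → (ι →₀ K) →ₗ[K] ι →₀ K) (d : κ → ι → K) (hD : ∀ c v t, D c v t = d c t * v t)
    (hW : ∀ c, ∀ v ∈ W, D c v ∈ W) {t : ι} (hsep : ∀ s ≠ t, ∃ c, d c s ≠ d c t)
    {v : ι →₀ K} (hv : v ∈ W) (ht : v t ≠ 0) : Finsupp.single t 1 ∈ W := by
  classical
  suffices h : ∀ S : Finset ι, ∀ v ∈ W, v t ≠ 0 → v.support ⊆ insert t S →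
      Finsupp.single t 1 ∈ W from h v.support v hv ht (Finset.subset_insert _ _)
  intro S
  induction S using Finset.induction_on with
  | empty =>
    intro v hv ht hS
    rw [insert_empty_eq, Finsupp.support_subset_singleton] at hS
    have : Finsupp.single t (1 : K) = (v t)⁻¹ • v := by
      rw [hS, Finsupp.smul_single, smul_eq_mul, Finsupp.single_eq_same, inv_mul_cancel₀ ht]
    exact this ▸ W.smul_mem _ hv
  | insert s S _ ih =>
    intro v hv ht hS
    by_cases hst : s = t
    · exact ih v hv ht (by rwa [hst, Finset.insert_idem] at hS)
    obtain ⟨c, hc⟩ := hsep s hst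
    refine ih (D c v - d c s • v) (W.sub_mem (hW c v hv) (W.smul_mem _ hv)) ?_ fun u hu => ?_
    · simpa [hD, ← sub_mul] using mul_ne_zero (sub_ne_zero.2 (Ne.symm hc)) ht
    · have hu' : (d c u - d c s) * v u ≠ 0 := by simpa [hD, sub_mul] using hu
      rcases Finset.mem_insert.1 (hS (Finsupp.mem_support_iff.2 (right_ne_zero_of_mul hu')))
        with rfl | hu''
      · exact Finset.mem_insert_self _ _
      rcases Finset.mem_insert.1 hu'' with rfl | hu''
      · simp at hu'
      · exact Finset.mem_insert_of_mem hu''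

section Simple

variable {n : ℕ} {lam : ℕ → ℤ} {W : Submodule ℂ (StdB n lam →₀ ℂ)}

lemma raiseOp_apply_of_isRaisingPosition {v : StdB n lam →₀ ℂ} {T₀ : StdB n lam} {k i : ℕ}
    (hpos : IsRaisingPosition n lam T₀ k i)
    (hmin : ∀ T ∈ v.support, defect n lam T₀ ≤ defect n lam T) :
    raiseOp (StdB n lam) k v ⟨shift T₀ k i 1, hpos.shift_mem⟩ = v T₀ * raiseCoeff T₀ k i := by
  have hi : i ∈ Finset.Icc 1 k := Finset.mem_Icc.2 ⟨hpos.one_le, hpos.le_row⟩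
  rw [raiseOp_apply]
  refine (Finset.sum_eq_single T₀ (fun S hS hST₀ => ?_) fun h => by
    rw [Finsupp.notMem_support_iff.1 h, zero_mul]).trans ?_
  · refine mul_eq_zero_of_right _ (Finset.sum_eq_zero fun j hj => ?_)
    rw [if_neg, mul_zero]
    intro hS_eq
    have hS_eq' : (S : Tableau) = shift (shift T₀ k i 1) k j (-1) := by
      rw [← shift_shift_neg (S : Tableau) k j 1]
      exact congrArg (shift · k j (-1)) hS_eq
    rcases eq_or_ne j i with rfl | hji
    · exact hST₀ (Subtype.ext (by rw [hS_eq', shift_shift_neg]))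
    · exact (hmin S hS).not_gt (hS_eq' ▸ hpos.defect_lt j hj hji (hS_eq' ▸ S.2))
  · rw [Finset.sum_eq_single_of_mem i hi fun j _ hji => ?_, if_pos rfl, mul_one]
    rw [if_neg, mul_zero]
    intro h
    have := congrFun h (k, j)
    simp [shift, hji] at this

lemma exists_single_highest_mem
    (hR : ∀ k, 1 ≤ k → k ≤ n - 1 → ∀ v ∈ W, raiseOp (StdB n lam) k v ∈ W)
    (hD : ∀ k, 1 ≤ k → k ≤ n → ∀ v ∈ W, diagOp (StdB n lam) k v ∈ W)
    {v : StdB n lam →₀ ℂ} (hv : v ∈ W) (hv0 : v ≠ 0) :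
    ∃ T : StdB n lam, (T : Tableau) = highest n lam ∧ Finsupp.single T 1 ∈ W := by
  obtain ⟨T, hT⟩ := Finsupp.support_nonempty_iff.2 hv0
  refine induction_on_defect (motive := fun T => ∀ v ∈ W, T ∈ v.support → _)
    (fun T ih v hv hT => ?_) T v hv hT
  obtain ⟨T₀, hT₀, hmin⟩ := v.support.exists_min_image (fun S => defect n lam S) ⟨T, hT⟩
  by_cases hT₀max : (T₀ : Tableau) = highest n lam
  · refine ⟨T₀, hT₀max, single_mem_of_separating (κ := Set.Icc 1 n) (fun c => diagOp _ c)
      (fun c S => diagCoeff S c) (fun c => diagOp_apply c) (fun c => hD c c.2.1 c.2.2)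
      (fun S hS => ?_) hv (Finsupp.mem_support_iff.1 hT₀)⟩
    by_contra! h
    exact hS (Subtype.ext ((eq_highest_of_diagCoeff_eq S.2 fun k h1 h2 =>
      (h ⟨k, h1, h2⟩).trans (by rw [hT₀max])).trans hT₀max.symm))
  obtain ⟨k, i, hpos⟩ := exists_isRaisingPosition T₀.2 hT₀max
  refine ih ⟨_, hpos.shift_mem⟩ ((hpos.defect_shift_lt).trans_le (hmin T hT)) _
    (hR k hpos.one_le_row hpos.row_le_pred v hv) ?_
  rw [Finsupp.mem_support_iff, raiseOp_apply_of_isRaisingPosition hpos hmin]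
  exact mul_ne_zero (Finsupp.mem_support_iff.1 hT₀) hpos.raiseCoeff_ne_zero

lemma single_mem_of_single_highest_mem
    (hL : ∀ k, 1 ≤ k → k ≤ n - 1 → ∀ v ∈ W, lowerOp (StdB n lam) k v ∈ W)
    {Tmax : StdB n lam} (hTmax : (Tmax : Tableau) = highest n lam)
    (hmax : Finsupp.single Tmax 1 ∈ W) (Q : StdB n lam) : Finsupp.single Q 1 ∈ W := by
  induction Q using induction_on_defect with
  | ih Q ih =>
    by_cases hQ : (Q : Tableau) = highest n lam
    · rwa [Subtype.ext (hQ.trans hTmax.symm)]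
    obtain ⟨k, i, hpos⟩ := exists_isRaisingPosition Q.2 hQ
    have hlow := hL k hpos.one_le_row hpos.row_le_pred _
      (ih ⟨_, hpos.shift_mem⟩ hpos.defect_shift_lt)
    rw [lowerOp_single, ← Finset.add_sum_erase _ _
      (Finset.mem_Icc.2 ⟨hpos.one_le, hpos.le_row⟩)] at hlow
    refine (W.smul_mem_iff hpos.lowerCoeff_ne_zero).1 ?_
    convert (W.add_mem_iff_left (Submodule.sum_mem W fun j hj => ?_)).1 hlow
    · rw [shift_shift_neg, emb_of_mem Q.2]
    by_cases hT : shift (shift Q k i 1) k j (-1) ∈ StdB n lam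
    · rw [emb_of_mem hT]
      exact W.smul_mem _ (ih _ (hpos.defect_lt j (Finset.mem_of_mem_erase hj)
        (Finset.ne_of_mem_erase hj) hT))
    · rw [emb_of_notMem hT, smul_zero]
      exact W.zero_mem

end Simple

theorem standard_tableaux_module_is_simple_general
    (n : ℕ) (lam : ℕ → ℤ) :
    ∀ W : Submodule ℂ (↥(StdB n lam) →₀ ℂ),
      (∀ k, 1 ≤ k → k ≤ n - 1 → ∀ v ∈ W,
        raiseOp (StdB n lam) k v ∈ W ∧ lowerOp (StdB n lam) k v ∈ W) →
      (∀ k, 1 ≤ k → k ≤ n → ∀ v ∈ W, diagOp (StdB n lam) k v ∈ W) →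
      W = ⊥ ∨ W = ⊤ := by
  intro W hRL hD
  refine or_iff_not_imp_left.2 fun hW => ?_
  obtain ⟨v, hv, hv0⟩ := W.ne_bot_iff.1 hW
  obtain ⟨Tmax, hTmax, hmax⟩ :=
    exists_single_highest_mem (fun k h1 h2 v hv => (hRL k h1 h2 v hv).1) hD hv hv0
  have hall := single_mem_of_single_highest_mem (fun k h1 h2 v hv => (hRL k h1 h2 v hv).2)
    hTmax hmax
  rw [eq_top_iff, ← Finsupp.basisSingleOne.span_eq, Submodule.span_le]
  rintro _ ⟨Q, rfl⟩
  simpa using hall Q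

/-- The span of the standard tableaux with fixed dominant integral top row is a simple module:
the only subspaces invariant under all the Gelfand–Tsetlin operators are `0` and the whole
space. -/
theorem standard_tableaux_module_is_simple
    (n : ℕ) (hn : 2 ≤ n) (lam : ℕ → ℤ)
    (hlam : ∀ j : ℕ, 1 ≤ j → j < n → lam (j+1) ≤ lam j) :
    ∀ W : Submodule ℂ (↥(StdB n lam) →₀ ℂ),
      (∀ k, 1 ≤ k → k ≤ n - 1 → ∀ v ∈ W,
        raiseOp (StdB n lam) k v ∈ W ∧ lowerOp (StdB n lam) k v ∈ W) →
      (∀ k, 1 ≤ k → k ≤ n → ∀ v ∈ W, diagOp (StdB n lam) k v ∈ W) →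
      W = ⊥ ∨ W = ⊤ :=
  standard_tableaux_module_is_simple_general n lam

end GT
end

section
/- Let G be a relation graph and T(L) a G-realization. Then for every row 1 ≤ k ≤ n−1 and all 1 ≤ i < j ≤ k, the entries satisfy l_{ki} ≠ l_{kj}. Consequently, all denominators ∏_{j≠i}(l_{ki} − l_{kj}) appearing in the Gelfand–Tsetlin formulas are nonzero on every tableau of B_G(T(L)). -/
namespace GT

lemma IsNonnegInt.add {z w : ℂ} (hz : IsNonnegInt z) (hw : IsNonnegInt w) :
    IsNonnegInt (z + w) := by
  obtain ⟨m, rfl⟩ := hz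
  obtain ⟨m', rfl⟩ := hw
  exact ⟨m + m', by push_cast; ring⟩

lemma IsPosInt.add_nonneg {z w : ℂ} (hz : IsPosInt z) (hw : IsNonnegInt w) :
    IsPosInt (z + w) := by
  obtain ⟨m, rfl⟩ := hz
  obtain ⟨m', rfl⟩ := hw
  exact ⟨m + m', by push_cast; ring⟩

lemma IsPosInt.isNonnegInt {z : ℂ} (hz : IsPosInt z) : IsNonnegInt z := by
  obtain ⟨m, rfl⟩ := hz
  exact ⟨m + 1, by push_cast; ring⟩

lemma IsPosInt.ne_zero {z : ℂ} (hz : IsPosInt z) : z ≠ 0 := by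
  obtain ⟨m, rfl⟩ := hz
  exact_mod_cast Nat.succ_ne_zero m

/-- A path from row `k < n` back to row `k` must climb somewhere, and climbing arrows are the
ones that force a strict drop of the entries. -/
def IntDrop (n : ℕ) (M : Tableau) (a b : ℕ × ℕ) : Prop :=
  IsNonnegInt (M a - M b) ∧ (IsPosInt (M a - M b) ∨ (a.1 = n ∧ b.1 = n) ∨ b.1 < a.1)

lemma IntDrop.trans {n : ℕ} {M : Tableau} {a b c : ℕ × ℕ} (ha : a.1 ≤ n)
    (hab : IntDrop n M a b) (hbc : IntDrop n M b c) : IntDrop n M a c := by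
  obtain ⟨hab₀, hab₁⟩ := hab
  obtain ⟨hbc₀, hbc₁⟩ := hbc
  have hsum : M a - M c = (M a - M b) + (M b - M c) := by ring
  refine ⟨hsum ▸ hab₀.add hbc₀, ?_⟩
  rcases hab₁ with hpos | hrows
  · exact Or.inl (hsum ▸ hpos.add_nonneg hbc₀)
  rcases hbc₁ with hpos | hrows'
  · exact Or.inl (hsum ▸ add_comm (M b - M c) _ ▸ hpos.add_nonneg hab₀)
  right
  omega

namespace IsRelationGraph

variable {n : ℕ} {E : (ℕ × ℕ) → (ℕ × ℕ) → Prop}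

lemma snd_lt_of_arrow_of_row_eq (hE : IsRelationGraph n E) {a b : ℕ × ℕ} (h : E a b)
    (ha : a.1 = n) (hb : b.1 = n) : a.2 < b.2 := by
  obtain ⟨haV, hbV, hab⟩ := hE.1 a b h
  have hne : a.2 ≠ b.2 := by omega
  refine hne.lt_or_gt.resolve_right fun hgt ↦ hE.2.1 n b.2 a.2 hbV.1 hgt (ha ▸ haV.2.1) ?_
  obtain ⟨a₁, a₂⟩ := a
  obtain ⟨b₁, b₂⟩ := b
  subst ha hb
  exact .single h

lemma intDrop_of_arrow (hE : IsRelationGraph n E) {M : Tableau} (hM : Satisfies n M E)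
    {a b : ℕ × ℕ} (h : E a b) : IntDrop n M a b := by
  obtain ⟨-, -, hrows⟩ := hE.1 a b h
  have hS := hM a.1 a.2 b.1 b.2 h
  rcases hrows with hdown | hup | ⟨ha, hb, -⟩
  · exact ⟨hS.1 (.inl hdown), .inr (.inr (by omega))⟩
  · have hpos := hS.2 hup
    exact ⟨hpos.isNonnegInt, .inl hpos⟩
  · exact ⟨hS.1 (.inr ⟨ha, hb, hE.snd_lt_of_arrow_of_row_eq h ha hb⟩), .inr (.inl ⟨ha, hb⟩)⟩

lemma intDrop_of_transGen (hE : IsRelationGraph n E) {M : Tableau} (hM : Satisfies n M E)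
    {a b : ℕ × ℕ} (h : Relation.TransGen E a b) : IntDrop n M a b := by
  induction h using Relation.TransGen.head_induction_on with
  | single hab => exact hE.intDrop_of_arrow hM hab
  | head hab _ ih =>
    exact IntDrop.trans (hE.1 _ _ hab).1.2.2 (hE.intDrop_of_arrow hM hab) ih

lemma ne_of_transGen_of_row_lt (hE : IsRelationGraph n E) {M : Tableau} (hM : Satisfies n M E)
    {k i j : ℕ} (hk : k < n) (h : Relation.TransGen E (k, i) (k, j)) : M (k, i) ≠ M (k, j) := by
  obtain ⟨-, hpos | hrows⟩ := hE.intDrop_of_transGen hM h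
  · exact sub_ne_zero.mp hpos.ne_zero
  · dsimp only at hrows
    omega

lemma realization_row_ne (hE : IsRelationGraph n E) {M : Tableau} (hM : IsRealization n E M)
    {k i j : ℕ} (hk : k ≤ n - 1) (hi : 1 ≤ i) (hj : 1 ≤ j) (hik : i ≤ k) (hjk : j ≤ k)
    (hij : i ≠ j) : M (k, i) ≠ M (k, j) := by
  intro heq
  have hkn : k < n := by omega
  have hiV : (k, i) ∈ Vtx n := ⟨hi, hik, hkn.le⟩
  have hjV : (k, j) ∈ Vtx n := ⟨hj, hjk, hkn.le⟩
  have hint : IsInt (M (k, i) - M (k, j)) := ⟨0, by simp [heq]⟩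
  rcases hE.2.2.2.1 k i j hkn hiV hjV hij (hM.2 k i j hk hiV hjV hij hint) with h | h
  · exact hE.ne_of_transGen_of_row_lt hM.1 hkn h heq
  · exact hE.ne_of_transGen_of_row_lt hM.1 hkn h heq.symm

end IsRelationGraph

theorem realization_row_entries_distinct_general
    (n : ℕ) (E : (ℕ × ℕ) → (ℕ × ℕ) → Prop) (hE : IsRelationGraph n E)
    (L : Tableau) (hL : IsRealization n E L) :
    (∀ k i j : ℕ, 1 ≤ k → k ≤ n - 1 → 1 ≤ i → i < j → j ≤ k → L (k, i) ≠ L (k, j)) ∧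
    (∀ M ∈ BG n E L, ∀ k i : ℕ, 1 ≤ i → i ≤ k → k ≤ n - 1 →
      (∏ j ∈ (Finset.Icc 1 k).erase i, (M (k, i) - M (k, j))) ≠ 0) := by
  refine ⟨fun k i j _ hk hi hij hjk ↦
    hE.realization_row_ne hL hk hi (by omega) (by omega) hjk hij.ne, ?_⟩
  rintro M ⟨-, -, -, hM⟩ k i hi hik hk
  refine Finset.prod_ne_zero_iff.mpr fun j hj ↦ sub_ne_zero.mpr ?_
  obtain ⟨hji, hj⟩ := Finset.mem_erase.mp hj
  rw [Finset.mem_Icc] at hj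
  exact hE.realization_row_ne hM hk hi hj.1 hik hj.2 hji.symm

/-- For a relation graph `G` and a `G`-realization `T(L)`, entries in each row `k ≤ n-1` are
pairwise distinct; consequently the denominators of the Gelfand–Tsetlin formulas are nonzero
on every tableau of `B_G(T(L))`. -/
theorem realization_row_entries_distinct
    (n : ℕ) (hn : 2 ≤ n) (E : (ℕ × ℕ) → (ℕ × ℕ) → Prop) (hE : IsRelationGraph n E)
    (L : Tableau) (hL : IsRealization n E L) :
    (∀ k i j : ℕ, 1 ≤ k → k ≤ n - 1 → 1 ≤ i → i < j → j ≤ k → L (k, i) ≠ L (k, j)) ∧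
    (∀ M ∈ BG n E L, ∀ k i : ℕ, 1 ≤ i → i ≤ k → k ≤ n - 1 →
      (∏ j ∈ (Finset.Icc 1 k).erase i, (M (k, i) - M (k, j))) ≠ 0) :=
  realization_row_entries_distinct_general n E hE L hL
end GT
end

section
/- Let G be a relation graph, T(L) a G-realization, T(R) ∈ B_G(T(L)), and z ∈ ℤ₀∖{0} such that T(R+z) is a G-realization and E⁺_{G(R)} ⊆ E⁺_{G(R+z)}. Then there exists (i,j) ∈ 𝔙 with z_{ij} ≠ 0 such that E⁺_{G(R)} ⊆ E⁺_{G(R+z_{ij}δ^{ij})} ⊆ E⁺_{G(R+z)}. -/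
/-!
Shifting the single entry at `v` changes only the down arrows at `v`, and the hypothesis carries
every other down arrow of `R` over to `R + z`. If `z` is positive somewhere, choose `v` among
those vertices maximising first the real part of the new entry `R v + z v` and then the row.
A down arrow `a → v` destroyed by the single shift but kept by the full one would make `z a`
positive with `R a + z a ≥ R v + z v` while `a` lies one row above `v`; an arrow `v → b` created
by the single shift is kept by the full one because `R b + z b ≤ R v + z v`. If `z` is negative
somewhere, negate `R` and `z`: this reverses all arrows, and the same choice with the order of
the rows reversed applies.
-/

namespace GT

theorem isNonnegInt_iff {x : ℂ} : IsNonnegInt x ↔ IsInt x ∧ 0 ≤ x.re := by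
  constructor
  · rintro ⟨m, rfl⟩
    exact ⟨⟨m, by simp⟩, by simp⟩
  · rintro ⟨⟨m, rfl⟩, hm⟩
    lift m to ℕ using by simpa using hm
    exact ⟨m, by simp⟩

theorem isInt_add_intCast_iff {x : ℂ} (k : ℤ) : IsInt (x + k) ↔ IsInt x := by
  constructor
  · rintro ⟨m, hm⟩
    exact ⟨m - k, by push_cast; linear_combination hm⟩
  · rintro ⟨m, rfl⟩
    exact ⟨m + k, by push_cast; ring⟩

def downArrows (D : ℕ × ℕ → ℕ × ℕ → Prop) (M : Tableau) : Set ((ℕ × ℕ) × (ℕ × ℕ)) :=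
  {p | D p.1 p.2 ∧ IsNonnegInt (M p.1 - M p.2)}

section downArrows

variable {D : ℕ × ℕ → ℕ × ℕ → Prop} {M : Tableau} {a b : ℕ × ℕ}

theorem mem_downArrows :
    (a, b) ∈ downArrows D M ↔ D a b ∧ IsInt (M a - M b) ∧ (M b).re ≤ (M a).re := by
  simp only [downArrows, Set.mem_ofPred_eq, isNonnegInt_iff, Complex.sub_re, sub_nonneg]

theorem mem_downArrows_addZ {z : ℕ × ℕ → ℤ} :
    (a, b) ∈ downArrows D (addZ M z) ↔
      D a b ∧ IsInt (M a - M b) ∧ (M b).re + z b ≤ (M a).re + z a := by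
  have hdiff : addZ M z a - addZ M z b = M a - M b + ((z a - z b : ℤ) : ℂ) := by
    simp only [addZ]; push_cast; ring
  rw [mem_downArrows, hdiff, isInt_add_intCast_iff]
  simp only [addZ, Complex.add_re, Complex.intCast_re]

theorem eplus_graphOf (n : ℕ) (M : Tableau) :
    Eplus (graphOf n M) = downArrows (fun a b => a ∈ Vtx n ∧ b ∈ Vtx n ∧ a.1 = b.1 + 1) M := by
  ext ⟨a, b⟩
  simp only [Eplus, graphOf, downArrows, Set.mem_ofPred_eq]
  constructor
  · rintro ⟨⟨ha, hb, ⟨-, h⟩ | ⟨h, -⟩ | ⟨h, h', -⟩⟩, hab⟩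
    · exact ⟨⟨ha, hb, hab⟩, h⟩
    all_goals omega
  · rintro ⟨⟨ha, hb, hab⟩, h⟩
    exact ⟨⟨ha, hb, Or.inl ⟨hab, h⟩⟩, hab⟩

theorem downArrows_flip_neg : downArrows (flip D) (-M) = Prod.swap ⁻¹' downArrows D M := by
  ext ⟨a, b⟩
  simp only [downArrows, Set.mem_ofPred_eq, Set.mem_preimage, Prod.swap_prod_mk, flip,
    Pi.neg_apply, neg_sub_neg]

end downArrows

theorem addZ_neg (M : Tableau) (z : ℕ × ℕ → ℤ) : addZ (-M) (-z) = -addZ M z := by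
  ext p
  simp only [addZ, Pi.neg_apply, Int.cast_neg, neg_add]

theorem sing_neg (v : ℕ × ℕ) (c : ℤ) : sing v (-c) = -sing v c := by
  ext p
  simp only [sing, Pi.neg_apply]
  split_ifs <;> simp

section singleShift

variable {β : Type*} [LinearOrder β] {D : ℕ × ℕ → ℕ × ℕ → Prop} {ρ : ℕ × ℕ → β}
  {M : Tableau} {z : ℕ × ℕ → ℤ}

theorem exists_single_shift_of_pos (hρ : ∀ a b, D a b → ρ b < ρ a)
    (hfin : (Function.support z).Finite) (hpos : ∃ p, 0 < z p)
    (h : downArrows D M ⊆ downArrows D (addZ M z)) :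
    ∃ v, 0 < z v ∧ downArrows D M ⊆ downArrows D (addZ M (sing v (z v))) ∧
      downArrows D (addZ M (sing v (z v))) ⊆ downArrows D (addZ M z) := by
  set s : ℕ × ℕ → ℝ := fun p => (M p).re + z p
  obtain ⟨v, hv, hmax⟩ := Set.exists_max_image {p | 0 < z p} (fun p => toLex (s p, ρ p))
    (hfin.subset fun p hp => ne_of_gt hp) hpos
  have hmax' : ∀ p, 0 < z p → s p ≤ s v ∧ (s p = s v → ρ p ≤ ρ v) := by
    intro p hp
    rcases Prod.Lex.toLex_le_toLex.mp (hmax p hp) with hlt | ⟨heq, hle⟩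
    · exact ⟨hlt.le, fun heq => absurd heq hlt.ne⟩
    · exact ⟨heq.le, fun _ => hle⟩
  have hsing : ∀ p, (sing v (z v) p : ℝ) = if p = v then (z v : ℝ) else 0 := by
    intro p; simp only [sing]; split_ifs <;> simp
  refine ⟨v, hv, ?_, ?_⟩ <;> rintro ⟨a, b⟩ hab
  · rw [mem_downArrows_addZ, hsing, hsing]
    obtain ⟨hD, hint, hle⟩ := mem_downArrows.mp hab
    refine ⟨hD, hint, ?_⟩
    by_cases hbv : b = v
    · subst hbv
      have hav : a ≠ b := by rintro rfl; exact lt_irrefl _ (hρ a a hD)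
      obtain ⟨-, -, hle'⟩ := mem_downArrows_addZ.mp (h hab)
      simp only [if_neg hav, ↓reduceIte, add_zero]
      by_contra! hlt
      have hza : 0 < z a := by exact_mod_cast (show (0 : ℝ) < z a by linarith)
      obtain ⟨hsa, hρa⟩ := hmax' a hza
      exact absurd (hρa (le_antisymm hsa hle')) (not_le.mpr (hρ a b hD))
    · have : (0 : ℝ) < z v := by exact_mod_cast hv
      split_ifs <;> linarith
  · obtain ⟨hD, hint, hle⟩ := mem_downArrows_addZ.mp hab
    rw [hsing, hsing] at hle
    by_cases hav : a = v
    · subst hav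
      have hbv : b ≠ a := by rintro rfl; exact lt_irrefl _ (hρ b b hD)
      simp only [if_neg hbv, ↓reduceIte, add_zero] at hle
      refine mem_downArrows_addZ.mpr ⟨hD, hint, ?_⟩
      by_cases hzb : 0 < z b
      · exact (hmax' b hzb).1
      · have : (z b : ℝ) ≤ 0 := by exact_mod_cast not_lt.mp hzb
        linarith
    · refine h (mem_downArrows.mpr ⟨hD, hint, ?_⟩)
      have : (0 : ℝ) < z v := by exact_mod_cast hv
      split_ifs at hle <;> linarith

theorem exists_single_shift (hρ : ∀ a b, D a b → ρ b < ρ a)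
    (hfin : (Function.support z).Finite) (hz : z ≠ 0)
    (h : downArrows D M ⊆ downArrows D (addZ M z)) :
    ∃ v, z v ≠ 0 ∧ downArrows D M ⊆ downArrows D (addZ M (sing v (z v))) ∧
      downArrows D (addZ M (sing v (z v))) ⊆ downArrows D (addZ M z) := by
  obtain ⟨p, hp⟩ := Function.ne_iff.mp hz
  rcases lt_or_gt_of_ne hp with hneg | hpos
  · obtain ⟨v, hv, h₁, h₂⟩ := exists_single_shift_of_pos (D := flip D)
      (ρ := OrderDual.toDual ∘ ρ) (M := -M) (z := -z) (fun a b hab => hρ b a hab)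
      (by rwa [Function.support_neg])
      ⟨p, by simpa using hneg⟩
      (by rw [addZ_neg, downArrows_flip_neg, downArrows_flip_neg]; exact Set.preimage_mono h)
    simp only [Pi.neg_apply, sing_neg, addZ_neg, downArrows_flip_neg,
      Prod.swap_surjective.preimage_subset_preimage_iff] at h₁ h₂
    exact ⟨v, by simpa using hv.ne', h₁, h₂⟩
  · obtain ⟨v, hv, h₁, h₂⟩ := exists_single_shift_of_pos hρ hfin ⟨p, hpos⟩ h
    exact ⟨v, hv.ne', h₁, h₂⟩

end singleShift

theorem proposition_general_general
    (n : ℕ) (R : Tableau)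
    (z : ℕ × ℕ → ℤ) (hz : ZZ0 n z) (hzne : z ≠ 0)
    (h2 : Eplus (graphOf n R) ⊆ Eplus (graphOf n (addZ R z))) :
    ∃ v ∈ Vtx n, z v ≠ 0 ∧
      Eplus (graphOf n R) ⊆ Eplus (graphOf n (addZ R (sing v (z v)))) ∧
      Eplus (graphOf n (addZ R (sing v (z v)))) ⊆ Eplus (graphOf n (addZ R z)) := by
  have hsupp : Function.support z ⊆ Vtx n := fun p hp => by_contra fun h => hp (hz.2 p h)
  have hVtx : (Vtx n).Finite :=
    (Set.finite_Iic (n, n)).subset fun p hp => ⟨hp.2.2, hp.2.1.trans hp.2.2⟩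
  simp only [eplus_graphOf] at h2 ⊢
  obtain ⟨v, hv, h₁, h₂⟩ :=
    exists_single_shift (ρ := Prod.fst) (fun a b hab => by omega) (hVtx.subset hsupp) hzne h2
  exact ⟨v, hsupp hv, hv, h₁, h₂⟩

/-- Proposition 4.7. -/
theorem proposition_general
    (n : ℕ) (hn : 2 ≤ n) (E : (ℕ × ℕ) → (ℕ × ℕ) → Prop) (hE : IsRelationGraph n E)
    (L : Tableau) (hL : IsRealization n E L)
    (R : Tableau) (hR : R ∈ BG n E L)
    (z : ℕ × ℕ → ℤ) (hz : ZZ0 n z) (hzne : z ≠ 0)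
    (h1 : IsRealization n E (addZ R z))
    (h2 : Eplus (graphOf n R) ⊆ Eplus (graphOf n (addZ R z))) :
    ∃ v ∈ Vtx n, z v ≠ 0 ∧
      Eplus (graphOf n R) ⊆ Eplus (graphOf n (addZ R (sing v (z v)))) ∧
      Eplus (graphOf n (addZ R (sing v (z v)))) ⊆ Eplus (graphOf n (addZ R z)) :=
  proposition_general_general n R z hz hzne h2

end GT
end

section
/- Let G be a relation graph and T(L) a G-realization. For any T(R) ∈ B_G(T(L)), the linear span of the set N_G(T(R)) = {T(S) ∈ B_G(T(L)) : E⁺_{G(R)} ⊆ E⁺_{G(S)}} is invariant under all the Gelfand–Tsetlin operators E_{k,k+1}, E_{k+1,k}, E_{kk}; that is, it is a submodule of V_G(T(L)). -/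
namespace GT

/-- The linear span of `N_G(T(R)) = {T(S) ∈ B_G(T(L)) : E⁺_{G(R)} ⊆ E⁺_{G(S)}}`. -/
noncomputable def NGspan (n : ℕ) (E : (ℕ × ℕ) → (ℕ × ℕ) → Prop) (L R : Tableau) :
    Submodule ℂ (↥(BG n E L) →₀ ℂ) :=
  Submodule.span ℂ ((fun T : ↥(BG n E L) => Finsupp.single T (1 : ℂ)) ''
    {T : ↥(BG n E L) | Eplus (graphOf n R) ⊆ Eplus (graphOf n (T : Tableau))})

/-! Applying `E_{k,k+1}` to `T(S)` produces `T(S + δ^{ki})` with a coefficient whose numerator is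
`∏_j (s_{ki} - s_{k+1,j})`. When that coefficient is nonzero, every down arrow of `G(S)` ending at
`(k,i)` carries a positive integer, so it survives raising `s_{ki}` by one, while down arrows
starting at `(k,i)` only get longer. Dually for `E_{k+1,k}`, whose numerator is
`∏_j (s_{ki} - s_{k-1,j})`, and `E_{kk}` is diagonal. Hence every operator maps `T(S)` with
`E⁺_{G(R)} ⊆ E⁺_{G(S)}` into the span of such tableaux. -/

lemma IsNonnegInt.add_one {z : ℂ} (h : IsNonnegInt z) : IsNonnegInt (z + 1) := by
  obtain ⟨m, rfl⟩ := h
  exact ⟨m + 1, by push_cast; ring⟩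

lemma IsNonnegInt.sub_one {z : ℂ} (h : IsNonnegInt z) (hz : z ≠ 0) : IsNonnegInt (z - 1) := by
  obtain ⟨m, rfl⟩ := h
  have hm : m ≠ 0 := by rintro rfl; exact hz Nat.cast_zero
  obtain ⟨m, rfl⟩ := Nat.exists_eq_succ_of_ne_zero hm
  exact ⟨m, by push_cast; ring⟩

lemma mem_Eplus_graphOf {n : ℕ} {M : Tableau} {p : (ℕ × ℕ) × (ℕ × ℕ)} :
    p ∈ Eplus (graphOf n M) ↔
      p.1 ∈ Vtx n ∧ p.2 ∈ Vtx n ∧ p.1.1 = p.2.1 + 1 ∧ IsNonnegInt (M p.1 - M p.2) := by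
  constructor
  · rintro ⟨⟨ha, hb, ⟨-, h⟩ | ⟨h, -⟩ | ⟨h₁, h₂, -⟩⟩, hrow⟩
    · exact ⟨ha, hb, hrow, h⟩
    all_goals omega
  · rintro ⟨ha, hb, hrow, h⟩
    exact ⟨⟨ha, hb, Or.inl ⟨hrow, h⟩⟩, hrow⟩

lemma shift_neg_one (M : Tableau) (k i : ℕ) : shift M k i (-1) = -shift (-M) k i 1 := by
  funext p
  simp only [shift, Pi.neg_apply]
  split_ifs <;> push_cast <;> ring

section ShiftDifference

variable {M : Tableau} {k i : ℕ} {a b : ℕ × ℕ}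

lemma isNonnegInt_shift_one_sub (hab : a ≠ b) (h : IsNonnegInt (M a - M b))
    (hb : b = (k, i) → M a ≠ M b) :
    IsNonnegInt (shift M k i 1 a - shift M k i 1 b) := by
  by_cases hbv : b = (k, i)
  · have hav : a ≠ (k, i) := hbv ▸ hab
    simp only [shift, if_pos hbv, if_neg hav]
    convert h.sub_one (sub_ne_zero.2 (hb hbv)) using 1
    push_cast; ring
  · by_cases hav : a = (k, i)
    · simp only [shift, if_pos hav, if_neg hbv]
      convert h.add_one using 1
      push_cast; ring
    · simpa only [shift, if_neg hav, if_neg hbv, add_zero] using h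

lemma isNonnegInt_shift_neg_one_sub (hab : a ≠ b) (h : IsNonnegInt (M a - M b))
    (ha : a = (k, i) → M a ≠ M b) :
    IsNonnegInt (shift M k i (-1) a - shift M k i (-1) b) := by
  have key := isNonnegInt_shift_one_sub (M := -M) hab.symm (by simpa only [Pi.neg_apply, neg_sub_neg] using h)
    (fun hav => by simpa [eq_comm] using ha hav)
  rw [shift_neg_one]
  simpa only [Pi.neg_apply, neg_sub_neg] using key

end ShiftDifference

lemma apply_ne_of_raiseCoeff_ne_zero {T : Tableau} {k i j : ℕ} (hc : raiseCoeff T k i ≠ 0)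
    (hj : j ∈ Finset.Icc 1 (k + 1)) : T (k, i) ≠ T (k + 1, j) := by
  rw [← sub_ne_zero]
  intro h
  exact hc (by rw [raiseCoeff, Finset.prod_eq_zero hj h, zero_div, neg_zero])

lemma apply_ne_of_lowerCoeff_ne_zero {T : Tableau} {k i j : ℕ} (hc : lowerCoeff T k i ≠ 0)
    (hj : j ∈ Finset.Icc 1 (k - 1)) : T (k, i) ≠ T (k - 1, j) := by
  rw [← sub_ne_zero]
  intro h
  exact hc (by rw [lowerCoeff, Finset.prod_eq_zero hj h, zero_div])

lemma Eplus_graphOf_subset_shift_one {n : ℕ} {T : Tableau} {k i : ℕ}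
    (hc : raiseCoeff T k i ≠ 0) :
    Eplus (graphOf n T) ⊆ Eplus (graphOf n (shift T k i 1)) := by
  rintro ⟨⟨a₁, a₂⟩, b⟩ hab
  obtain ⟨ha, hb, hrow, h⟩ := mem_Eplus_graphOf.1 hab
  dsimp only at ha hb hrow h
  refine mem_Eplus_graphOf.2 ⟨ha, hb, hrow, isNonnegInt_shift_one_sub (a := (a₁, a₂)) ?_ h ?_⟩
  · rintro rfl; omega
  · rintro rfl
    obtain rfl : a₁ = k + 1 := hrow
    obtain ⟨h₁, h₂, -⟩ := ha
    exact (apply_ne_of_raiseCoeff_ne_zero hc (Finset.mem_Icc.2 ⟨h₁, h₂⟩)).symm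

lemma Eplus_graphOf_subset_shift_neg_one {n : ℕ} {T : Tableau} {k i : ℕ}
    (hc : lowerCoeff T k i ≠ 0) :
    Eplus (graphOf n T) ⊆ Eplus (graphOf n (shift T k i (-1))) := by
  rintro ⟨a, ⟨b₁, b₂⟩⟩ hab
  obtain ⟨ha, hb, hrow, h⟩ := mem_Eplus_graphOf.1 hab
  dsimp only at ha hb hrow h
  refine mem_Eplus_graphOf.2 ⟨ha, hb, hrow, isNonnegInt_shift_neg_one_sub (b := (b₁, b₂)) ?_ h ?_⟩
  · rintro rfl; omega
  · rintro rfl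
    obtain rfl : b₁ = k - 1 := by simp only at hrow; omega
    obtain ⟨h₁, h₂, -⟩ := hb
    exact apply_ne_of_lowerCoeff_ne_zero hc (Finset.mem_Icc.2 ⟨h₁, h₂⟩)

section NGspan

variable {n : ℕ} {E : (ℕ × ℕ) → (ℕ × ℕ) → Prop} {L R : Tableau}

lemma single_mem_NGspan {T : ↥(BG n E L)}
    (hT : Eplus (graphOf n R) ⊆ Eplus (graphOf n (T : Tableau))) :
    Finsupp.single T 1 ∈ NGspan n E L R :=
  Submodule.subset_span ⟨T, hT, rfl⟩

lemma smul_emb_mem_NGspan {c : ℂ} {M : Tableau}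
    (hM : c ≠ 0 → Eplus (graphOf n R) ⊆ Eplus (graphOf n M)) :
    c • emb (BG n E L) M ∈ NGspan n E L R := by
  by_cases hc : c = 0
  · rw [hc, zero_smul]
    exact Submodule.zero_mem _
  refine Submodule.smul_mem _ c ?_
  unfold emb
  split_ifs with hmem
  · exact single_mem_NGspan (T := ⟨M, hmem⟩) (hM hc)
  · exact Submodule.zero_mem _

lemma map_mem_NGspan (f : (↥(BG n E L) →₀ ℂ) →ₗ[ℂ] (↥(BG n E L) →₀ ℂ))
    (hf : ∀ T : ↥(BG n E L), Eplus (graphOf n R) ⊆ Eplus (graphOf n (T : Tableau)) →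
      f (Finsupp.single T 1) ∈ NGspan n E L R)
    {v : ↥(BG n E L) →₀ ℂ} (hv : v ∈ NGspan n E L R) : f v ∈ NGspan n E L R := by
  have hmap : (NGspan n E L R).map f ≤ NGspan n E L R := by
    rw [NGspan, Submodule.map_span_le]
    rintro _ ⟨T, hT, rfl⟩
    exact hf T hT
  exact hmap (Submodule.mem_map_of_mem hv)

lemma raiseOp_single_mem_NGspan (k : ℕ) {T : ↥(BG n E L)}
    (hT : Eplus (graphOf n R) ⊆ Eplus (graphOf n (T : Tableau))) :
    raiseOp (BG n E L) k (Finsupp.single T 1) ∈ NGspan n E L R := by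
  simp only [raiseOp, Finsupp.lsum_single, LinearMap.toSpanSingleton_apply, one_smul]
  exact Submodule.sum_mem _ fun i _ =>
    smul_emb_mem_NGspan fun hc => hT.trans (Eplus_graphOf_subset_shift_one hc)

lemma lowerOp_single_mem_NGspan (k : ℕ) {T : ↥(BG n E L)}
    (hT : Eplus (graphOf n R) ⊆ Eplus (graphOf n (T : Tableau))) :
    lowerOp (BG n E L) k (Finsupp.single T 1) ∈ NGspan n E L R := by
  simp only [lowerOp, Finsupp.lsum_single, LinearMap.toSpanSingleton_apply, one_smul]
  exact Submodule.sum_mem _ fun i _ =>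
    smul_emb_mem_NGspan fun hc => hT.trans (Eplus_graphOf_subset_shift_neg_one hc)

lemma diagOp_single_mem_NGspan (k : ℕ) {T : ↥(BG n E L)}
    (hT : Eplus (graphOf n R) ⊆ Eplus (graphOf n (T : Tableau))) :
    diagOp (BG n E L) k (Finsupp.single T 1) ∈ NGspan n E L R := by
  simp only [diagOp, Finsupp.lsum_single, LinearMap.toSpanSingleton_apply, one_smul]
  exact Submodule.smul_mem _ _ (single_mem_NGspan hT)

end NGspan

theorem NGspan_is_submodule_general
    (n : ℕ) (E : (ℕ × ℕ) → (ℕ × ℕ) → Prop)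
    (L : Tableau)
    (R : Tableau) :
    IsSubmoduleGT n (BG n E L) (NGspan n E L R) :=
  ⟨fun k _ _ _ hv =>
    ⟨map_mem_NGspan _ (fun _ => raiseOp_single_mem_NGspan k) hv,
      map_mem_NGspan _ (fun _ => lowerOp_single_mem_NGspan k) hv⟩,
    fun k _ _ _ hv => map_mem_NGspan _ (fun _ => diagOp_single_mem_NGspan k) hv⟩

/-- The span of `N_G(T(R))` is invariant under all the Gelfand–Tsetlin operators, i.e. it is
a submodule of `V_G(T(L))`. -/
theorem NGspan_is_submodule
    (n : ℕ) (hn : 2 ≤ n) (E : (ℕ × ℕ) → (ℕ × ℕ) → Prop) (hE : IsRelationGraph n E)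
    (L : Tableau) (hL : IsRealization n E L)
    (R : Tableau) (hR : R ∈ BG n E L) :
    IsSubmoduleGT n (BG n E L) (NGspan n E L R) :=
  NGspan_is_submodule_general n E L R
end GT
end
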